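/- arXiv:2303.12240 — 4 statements merged into one kernel-verified Lean document; each statement's English description precedes it below -/
import Mathlib

section
/- There is a bijection between plane trees with n edges and noncrossing perfect matchings on 2n points: label the boundary of a plane tree with 1,...,2n in increasing order counter-clockwise from the root, so each edge receives two indices (i,j) with i < j; the resulting set of n pairs is a noncrossing perfect matching of {1,...,2n}, and this map is a bijection. -/
/-- A plane tree: a root with a linearly ordered list of subtrees. -/
inductive PlaneTree : Type
  | node : List PlaneTree → PlaneTree

/-- Number of edges of a plane tree. -/
def PlaneTree.edges : PlaneTree → ℕ
  | .node ts => (ts.attach.map fun t => t.1.edges + 1).sum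
decreasing_by
  have := List.sizeOf_lt_of_mem t.2
  simp only [PlaneTree.node.sizeOf_spec] at *
  omega

/-- Boundary labeling of a forest starting at label `i`: each edge of the
tree receives the labels on its left and right sides. -/
def matchList : ℕ → List PlaneTree → Finset (ℕ × ℕ)
  | _, [] => ∅
  | i, PlaneTree.node cs :: ts =>
    insert (i, i + 2 * (PlaneTree.node cs).edges + 1)
      (matchList (i + 1) cs ∪ matchList (i + 2 * (PlaneTree.node cs).edges + 2) ts)
termination_by i ts => sizeOf ts

/-- The noncrossing perfect matching on `{1,…,2n}` encoding a plane tree with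
`n` edges, via the boundary labeling `1,…,2n` counter-clockwise from the root. -/
def PlaneTree.toMatching : PlaneTree → Finset (ℕ × ℕ)
  | .node ts => matchList 1 ts

/-- `M` is a perfect matching of `{1,…,2n}`, with pairs written `(i,j)`, `i < j`. -/
def IsMatching (n : ℕ) (M : Finset (ℕ × ℕ)) : Prop :=
  (∀ p ∈ M, 1 ≤ p.1 ∧ p.1 < p.2 ∧ p.2 ≤ 2 * n) ∧
  ∀ k, 1 ≤ k → k ≤ 2 * n → ∃! p : ℕ × ℕ, p ∈ M ∧ (p.1 = k ∨ p.2 = k)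

/-- `M` is a noncrossing perfect matching of `{1,…,2n}`. -/
def IsNoncrossingMatching (n : ℕ) (M : Finset (ℕ × ℕ)) : Prop :=
  IsMatching n M ∧ ¬ ∃ a b c d : ℕ, a < b ∧ b < c ∧ c < d ∧ (a, c) ∈ M ∧ (b, d) ∈ M

/-- The cyclic index-shift map `φ` on matchings: shift all indices down by one,
with `1 ↦ 2n`. -/
def phi (n : ℕ) (M : Finset (ℕ × ℕ)) : Finset (ℕ × ℕ) :=
  ((M.filter fun p => p.1 = 1).image fun p => (p.2 - 1, 2 * n)) ∪
  ((M.filter fun p => p.1 ≠ 1).image fun p => (p.1 - 1, p.2 - 1))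

/-!
Peeling off the first subtree `node cs` of a forest labelled from `i` gives the arc
`(i, j)` with `j = i + 2·edges (node cs) + 1`, the labelling of `cs` inside `(i, j)` and the
labelling of the remaining forest after `j`; a union of such nested and juxtaposed pieces is a
noncrossing perfect matching. Conversely, in a noncrossing perfect matching of the interval
`[i, c)`, let `(i, j)` be the arc at `i`: every other arc lies strictly inside `(i, j)` or
strictly after `j`, so both pieces are again noncrossing perfect matchings of intervals and
recursion on them inverts the labelling. Injectivity holds because `j` and the two pieces
are read off the matching.
-/

theorem PlaneTree.forest_induction {motive : List PlaneTree → Prop} (nil : motive [])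
    (cons : ∀ cs ts, motive cs → motive ts → motive (PlaneTree.node cs :: ts)) :
    ∀ ts, motive ts
  | [] => nil
  | PlaneTree.node cs :: ts =>
    cons cs ts (forest_induction nil cons cs) (forest_induction nil cons ts)
termination_by ts => sizeOf ts

lemma PlaneTree.edges_node (ts : List PlaneTree) :
    (PlaneTree.node ts).edges = (ts.map fun t => t.edges + 1).sum := by
  rw [PlaneTree.edges]
  exact congrArg List.sum (List.attach_map_val (f := fun t : PlaneTree => t.edges + 1))

lemma PlaneTree.edges_node_cons (t : PlaneTree) (ts : List PlaneTree) :
    (PlaneTree.node (t :: ts)).edges = t.edges + 1 + (PlaneTree.node ts).edges := by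
  simp [PlaneTree.edges_node]

lemma matchList_cons (i : ℕ) (cs ts : List PlaneTree) :
    matchList i (PlaneTree.node cs :: ts) =
      insert (i, i + 2 * (PlaneTree.node cs).edges + 1)
        (matchList (i + 1) cs ∪ matchList (i + 2 * (PlaneTree.node cs).edges + 2) ts) := by
  rw [matchList]

lemma matchList_nil (i : ℕ) : matchList i [] = ∅ := by
  rw [matchList]

def ArcsWithin (a b : ℕ) (M : Finset (ℕ × ℕ)) : Prop :=
  ∀ p ∈ M, a ≤ p.1 ∧ p.1 < p.2 ∧ p.2 < b

def IsPerfectMatchingOn (a b : ℕ) (M : Finset (ℕ × ℕ)) : Prop :=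
  ArcsWithin a b M ∧ ∀ k, a ≤ k → k < b → ∃! p : ℕ × ℕ, p ∈ M ∧ (p.1 = k ∨ p.2 = k)

def Noncrossing (M : Finset (ℕ × ℕ)) : Prop :=
  ¬ ∃ a b c d : ℕ, a < b ∧ b < c ∧ c < d ∧ (a, c) ∈ M ∧ (b, d) ∈ M

lemma isNoncrossingMatching_iff {n : ℕ} {M : Finset (ℕ × ℕ)} :
    IsNoncrossingMatching n M ↔ IsPerfectMatchingOn 1 (1 + 2 * n) M ∧ Noncrossing M := by
  simp only [IsNoncrossingMatching, IsMatching, IsPerfectMatchingOn, ArcsWithin, Noncrossing,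
    Nat.lt_one_add_iff]

lemma Finset.existsUnique_mem_union_left {α : Type*} [DecidableEq α] {A B : Finset α}
    {P : α → Prop} (hA : ∃! p, p ∈ A ∧ P p) (hB : ∀ q ∈ B, ¬ P q) :
    ∃! p, p ∈ A ∪ B ∧ P p := by
  obtain ⟨p, hp, hpu⟩ := hA
  refine ⟨p, ⟨Finset.mem_union_left _ hp.1, hp.2⟩, fun q ⟨hq, hPq⟩ => ?_⟩
  rcases Finset.mem_union.1 hq with hq | hq
  · exact hpu q ⟨hq, hPq⟩
  · exact absurd hPq (hB q hq)

section Matchings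

variable {a b c d i j : ℕ} {A B M : Finset (ℕ × ℕ)}

lemma ArcsWithin.touch (hM : ArcsWithin a b M) {p : ℕ × ℕ} (hp : p ∈ M) {k : ℕ}
    (hpk : p.1 = k ∨ p.2 = k) : a ≤ k ∧ k < b := by
  have := hM p hp
  omega

lemma ArcsWithin.union (hA : ArcsWithin a b A) (hB : ArcsWithin b c B) (hab : a ≤ b)
    (hbc : b ≤ c) : ArcsWithin a c (A ∪ B) := by
  intro p hp
  rcases Finset.mem_union.1 hp with hp | hp
  · have := hA p hp; omega
  · have := hB p hp; omega

lemma ArcsWithin.insert_nest (hA : ArcsWithin (i + 1) j A) (hij : i < j) :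
    ArcsWithin i (j + 1) (insert (i, j) A) := by
  intro p hp
  rcases Finset.mem_insert.1 hp with rfl | hp
  · exact ⟨le_rfl, hij, j.lt_succ_self⟩
  · have := hA p hp; omega

lemma IsPerfectMatchingOn.eq_of_touch (hM : IsPerfectMatchingOn a b M) {p q : ℕ × ℕ}
    (hp : p ∈ M) (hq : q ∈ M) {k : ℕ} (hpk : p.1 = k ∨ p.2 = k) (hqk : q.1 = k ∨ q.2 = k) :
    p = q :=
  (hM.2 k (hM.1.touch hp hpk).1 (hM.1.touch hp hpk).2).unique ⟨hp, hpk⟩ ⟨hq, hqk⟩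

lemma IsPerfectMatchingOn.union (hA : IsPerfectMatchingOn a b A)
    (hB : IsPerfectMatchingOn b c B) (hab : a ≤ b) (hbc : b ≤ c) :
    IsPerfectMatchingOn a c (A ∪ B) := by
  refine ⟨hA.1.union hB.1 hab hbc, fun k hak hkc => ?_⟩
  rcases lt_or_ge k b with hkb | hbk
  · exact Finset.existsUnique_mem_union_left (hA.2 k hak hkb) fun q hq hqk => by
      have := hB.1.touch hq hqk; omega
  · rw [Finset.union_comm]
    exact Finset.existsUnique_mem_union_left (hB.2 k hbk hkc) fun q hq hqk => by
      have := hA.1.touch hq hqk; omega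

lemma IsPerfectMatchingOn.insert_nest (hA : IsPerfectMatchingOn (i + 1) j A) (hij : i < j) :
    IsPerfectMatchingOn i (j + 1) (insert (i, j) A) := by
  refine ⟨hA.1.insert_nest hij, fun k hik hkj => ?_⟩
  rw [Finset.insert_eq]
  by_cases hk : k = i ∨ k = j
  · refine Finset.existsUnique_mem_union_left
      ⟨(i, j), ⟨Finset.mem_singleton_self _, by omega⟩, fun q hq => Finset.mem_singleton.1 hq.1⟩
      fun q hq hqk => ?_
    have := hA.1.touch hq hqk; omega
  · rw [Finset.union_comm]
    refine Finset.existsUnique_mem_union_left (hA.2 k (by omega) (by omega)) fun q hq hqk => ?_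
    rw [Finset.mem_singleton.1 hq] at hqk; omega

lemma Noncrossing.union (hA : ArcsWithin a b A) (hB : ArcsWithin b c B) (hA' : Noncrossing A)
    (hB' : Noncrossing B) : Noncrossing (A ∪ B) := by
  rintro ⟨w, x, y, z, hwx, hxy, hyz, h1, h2⟩
  rcases Finset.mem_union.1 h1 with h1 | h1 <;> rcases Finset.mem_union.1 h2 with h2 | h2
  · exact hA' ⟨w, x, y, z, hwx, hxy, hyz, h1, h2⟩
  · have := hA _ h1; have := hB _ h2; simp only at *; omega
  · have := hB _ h1; have := hA _ h2; simp only at *; omega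
  · exact hB' ⟨w, x, y, z, hwx, hxy, hyz, h1, h2⟩

lemma Noncrossing.insert_nest (hA : ArcsWithin (i + 1) j A) (hA' : Noncrossing A) :
    Noncrossing (insert (i, j) A) := by
  rintro ⟨w, x, y, z, hwx, hxy, hyz, h1, h2⟩
  rcases Finset.mem_insert.1 h1 with h1 | h1 <;> rcases Finset.mem_insert.1 h2 with h2 | h2
  · simp only [Prod.mk.injEq] at h1 h2; omega
  · have := hA _ h2; simp only [Prod.mk.injEq] at *; omega
  · have := hA _ h1; simp only [Prod.mk.injEq] at *; omega
  · exact hA' ⟨w, x, y, z, hwx, hxy, hyz, h1, h2⟩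

lemma Noncrossing.mono (hM : Noncrossing M) (hAM : A ⊆ M) : Noncrossing A :=
  fun ⟨w, x, y, z, hwx, hxy, hyz, h1, h2⟩ => hM ⟨w, x, y, z, hwx, hxy, hyz, hAM h1, hAM h2⟩

lemma filter_insert_union_nest (hA : ArcsWithin (i + 1) j A) (hB : ArcsWithin (j + 1) c B)
    (hij : i < j) :
    (insert (i, j) A ∪ B).filter (·.2 < j) = A ∧ (insert (i, j) A ∪ B).filter (j < ·.1) = B := by
  refine ⟨Finset.ext fun q => ?_, Finset.ext fun q => ?_⟩ <;>
  · have := hA q; have := hB q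
    simp only [Finset.mem_filter, Finset.mem_union, Finset.mem_insert]
    grind

lemma IsPerfectMatchingOn.filter_of_cover (hM : IsPerfectMatchingOn a b M) (P : ℕ × ℕ → Prop)
    [DecidablePred P] (hP : ArcsWithin c d (M.filter P))
    (hcover : ∀ q ∈ M, ∀ k, c ≤ k → k < d → (q.1 = k ∨ q.2 = k) → P q) (hac : a ≤ c)
    (hdb : d ≤ b) : IsPerfectMatchingOn c d (M.filter P) := by
  refine ⟨hP, fun k hck hkd => ?_⟩
  obtain ⟨p, ⟨hp, hpk⟩, hpu⟩ := hM.2 k (by omega) (by omega)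
  exact ⟨p, ⟨Finset.mem_filter.2 ⟨hp, hcover p hp k hck hkd hpk⟩, hpk⟩,
    fun q hq => hpu q ⟨(Finset.mem_filter.1 hq.1).1, hq.2⟩⟩

lemma IsPerfectMatchingOn.trichotomy (hM : IsPerfectMatchingOn i c M) (hM' : Noncrossing M)
    (hij : (i, j) ∈ M) {q : ℕ × ℕ} (hq : q ∈ M) :
    (q.1 = i ∧ q.2 = j) ∨ (i < q.1 ∧ q.2 < j) ∨ j < q.1 := by
  by_cases hqij : q = (i, j)
  · exact Or.inl (Prod.ext_iff.1 hqij)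
  have hqi : q.1 ≠ i := fun h => hqij (hM.eq_of_touch hq hij (Or.inl h) (Or.inl rfl))
  have hqj : ¬ (q.1 = j ∨ q.2 = j) := fun h => hqij (hM.eq_of_touch hq hij h (Or.inr rfl))
  have := hM.1 q hq
  have hnc : ¬ (q.1 < j ∧ j < q.2) := fun ⟨h1, h2⟩ =>
    hM' ⟨i, q.1, j, q.2, by omega, h1, h2, hij, hq⟩
  omega

lemma IsPerfectMatchingOn.exists_nest_decomposition (hM : IsPerfectMatchingOn i c M)
    (hM' : Noncrossing M) (hic : i < c) :
    ∃ j, i < j ∧ j < c ∧ IsPerfectMatchingOn (i + 1) j (M.filter (·.2 < j)) ∧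
      IsPerfectMatchingOn (j + 1) c (M.filter (j < ·.1)) ∧
      insert (i, j) (M.filter (·.2 < j) ∪ M.filter (j < ·.1)) = M := by
  obtain ⟨⟨i', j⟩, ⟨hij, hi⟩, -⟩ := hM.2 i le_rfl hic
  have hb := hM.1 _ hij
  obtain rfl : i' = i := by simp only at hi hb; omega
  have htri := fun q (hq : q ∈ M) => hM.trichotomy hM' hij hq
  refine ⟨j, hb.2.1, hb.2.2, hM.filter_of_cover _ ?_ ?_ (by omega) (by omega),
    hM.filter_of_cover _ ?_ ?_ (by omega) le_rfl, ?_⟩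
  · intro q hq
    rw [Finset.mem_filter] at hq
    have := hM.1 q hq.1; have := htri q hq.1; omega
  · intro q hq k _ _ _
    have := hM.1 q hq; have := htri q hq; omega
  · intro q hq
    rw [Finset.mem_filter] at hq
    have := hM.1 q hq.1; omega
  · intro q hq k _ _ _
    have := hM.1 q hq; have := htri q hq; omega
  · ext q
    simp only [Finset.mem_insert, Finset.mem_union, Finset.mem_filter, Prod.ext_iff]
    have := hM.1 q; have := htri q
    grind

end Matchings

theorem matchList_isPerfectMatchingOn (ts : List PlaneTree) (i : ℕ) :
    IsPerfectMatchingOn i (i + 2 * (PlaneTree.node ts).edges) (matchList i ts) := by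
  induction ts using PlaneTree.forest_induction generalizing i with
  | nil =>
    rw [matchList_nil]
    refine ⟨fun p hp => absurd hp (Finset.notMem_empty p), fun k hik hki => ?_⟩
    simp [PlaneTree.edges_node] at hki
    omega
  | cons cs ts hcs hts =>
    set e := (PlaneTree.node cs).edges
    have hA := hcs (i + 1)
    rw [show i + 1 + 2 * e = i + 2 * e + 1 by omega] at hA
    rw [matchList_cons, ← Finset.insert_union, PlaneTree.edges_node_cons,
      show i + 2 * (e + 1 + (PlaneTree.node ts).edges) =
        i + 2 * e + 2 + 2 * (PlaneTree.node ts).edges by ring]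
    exact (hA.insert_nest (by omega)).union (hts _) (by omega) (by omega)

lemma arcsWithin_matchList_succ (cs : List PlaneTree) (i : ℕ) :
    ArcsWithin (i + 1) (i + 2 * (PlaneTree.node cs).edges + 1) (matchList (i + 1) cs) := by
  have := (matchList_isPerfectMatchingOn cs (i + 1)).1
  rwa [show i + 1 + 2 * (PlaneTree.node cs).edges = i + 2 * (PlaneTree.node cs).edges + 1 by
    omega] at this

theorem matchList_noncrossing (ts : List PlaneTree) (i : ℕ) : Noncrossing (matchList i ts) := by
  induction ts using PlaneTree.forest_induction generalizing i with
  | nil => simp [matchList_nil, Noncrossing]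
  | cons cs ts hcs hts =>
    have hA := arcsWithin_matchList_succ cs i
    rw [matchList_cons, ← Finset.insert_union]
    exact ((hcs _).insert_nest hA).union (hA.insert_nest (by omega))
      (matchList_isPerfectMatchingOn ts _).1 (hts _)

lemma matchList_cons_filter (i : ℕ) (cs ts : List PlaneTree) :
    (matchList i (PlaneTree.node cs :: ts)).filter
        (·.2 < i + 2 * (PlaneTree.node cs).edges + 1) = matchList (i + 1) cs ∧
      (matchList i (PlaneTree.node cs :: ts)).filter
        (i + 2 * (PlaneTree.node cs).edges + 1 < ·.1) =
        matchList (i + 2 * (PlaneTree.node cs).edges + 2) ts := by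
  rw [matchList_cons, ← Finset.insert_union]
  exact filter_insert_union_nest (arcsWithin_matchList_succ cs i)
    (matchList_isPerfectMatchingOn ts _).1 (by omega)

theorem matchList_injective {i : ℕ} {ts ts' : List PlaneTree}
    (h : matchList i ts = matchList i ts') : ts = ts' := by
  induction ts using PlaneTree.forest_induction generalizing i ts' with
  | nil =>
    obtain _ | ⟨⟨cs'⟩, ts'⟩ := ts'
    · rfl
    · rw [matchList_nil, matchList_cons] at h
      exact absurd h.symm (Finset.insert_ne_empty _ _)
  | cons cs ts hcs hts =>
    obtain _ | ⟨⟨cs'⟩, ts'⟩ := ts'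
    · rw [matchList_nil, matchList_cons] at h
      exact absurd h (Finset.insert_ne_empty _ _)
    have hroot : ∀ cs ts,
        (i, i + 2 * (PlaneTree.node cs).edges + 1) ∈ matchList i (PlaneTree.node cs :: ts) :=
      fun cs ts => by rw [matchList_cons]; exact Finset.mem_insert_self _ _
    have hedges : (PlaneTree.node cs).edges = (PlaneTree.node cs').edges := by
      have hroot' := hroot cs' ts'
      rw [← h] at hroot'
      have := (matchList_isPerfectMatchingOn _ i).eq_of_touch (hroot cs ts) hroot'
        (Or.inl rfl) (Or.inl rfl)
      simp only [Prod.mk.injEq] at this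
      omega
    obtain ⟨hA, hB⟩ := matchList_cons_filter i cs ts
    obtain ⟨hA', hB'⟩ := matchList_cons_filter i cs' ts'
    rw [h, hedges] at hA hB
    rw [hcs (hA.symm.trans hA'), hts (hB.symm.trans hB')]

theorem exists_matchList_eq_of_noncrossing {i c : ℕ} {M : Finset (ℕ × ℕ)}
    (hM : IsPerfectMatchingOn i c M) (hM' : Noncrossing M) (hic : i ≤ c) :
    ∃ ts, i + 2 * (PlaneTree.node ts).edges = c ∧ matchList i ts = M := by
  rcases hic.eq_or_lt with rfl | hic
  · refine ⟨[], by simp [PlaneTree.edges_node], ?_⟩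
    rw [matchList_nil, eq_comm, Finset.eq_empty_iff_forall_notMem]
    exact fun p hp => by have := hM.1 p hp; omega
  obtain ⟨j, hij, hjc, hA, hB, hM_eq⟩ := hM.exists_nest_decomposition hM' hic
  obtain ⟨cs, hcs, hA⟩ :=
    exists_matchList_eq_of_noncrossing hA (hM'.mono (Finset.filter_subset _ _)) hij
  obtain ⟨ts, hts, hB⟩ :=
    exists_matchList_eq_of_noncrossing hB (hM'.mono (Finset.filter_subset _ _)) hjc
  refine ⟨PlaneTree.node cs :: ts, by rw [PlaneTree.edges_node_cons]; omega, ?_⟩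
  rw [matchList_cons, show i + 2 * (PlaneTree.node cs).edges + 1 = j by omega,
    show i + 2 * (PlaneTree.node cs).edges + 2 = j + 1 by omega, hA, hB, hM_eq]
termination_by c - i

/-- Boundary labeling gives a bijection between plane trees with `n` edges and
noncrossing perfect matchings of `{1,…,2n}`. -/
theorem toMatching_bijOn (n : ℕ) :
    (∀ T : PlaneTree, T.edges = n → IsNoncrossingMatching n T.toMatching) ∧
    Set.BijOn PlaneTree.toMatching {T : PlaneTree | T.edges = n}
      {M : Finset (ℕ × ℕ) | IsNoncrossingMatching n M} := by
  have maps : ∀ T : PlaneTree, T.edges = n → IsNoncrossingMatching n T.toMatching := by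
    rintro ⟨ts⟩ rfl
    exact isNoncrossingMatching_iff.2
      ⟨matchList_isPerfectMatchingOn ts 1, matchList_noncrossing ts 1⟩
  refine ⟨maps, maps, ?_, ?_⟩
  · rintro ⟨ts⟩ - ⟨ts'⟩ - h
    exact congrArg PlaneTree.node (matchList_injective h)
  · intro M hM
    obtain ⟨hM, hM'⟩ := isNoncrossingMatching_iff.1 hM
    obtain ⟨ts, hts, rfl⟩ := exists_matchList_eq_of_noncrossing hM hM' (by omega)
    exact ⟨PlaneTree.node ts, (by omega : (PlaneTree.node ts).edges = n), rfl⟩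
end

section
/- The map φ defined on plane trees with n edges (encoded as noncrossing perfect matchings on {1,...,2n}) by φ(T) = {(k-1, 2n) : (1,k) ∈ T} ∪ {(i-1, j-1) : (i,j) ∈ T, 1 < i < j ≤ 2n} is a bijection from the set of plane trees with n edges to itself. -/
def psi (n : ℕ) (M : Finset (ℕ × ℕ)) : Finset (ℕ × ℕ) :=
  M.image fun p => if p.2 = 2 * n then (1, p.1 + 1) else (p.1 + 1, p.2 + 1)

lemma phi_eq_image (n : ℕ) (M : Finset (ℕ × ℕ)) :
    phi n M = M.image fun p => if p.1 = 1 then (p.2 - 1, 2 * n) else (p.1 - 1, p.2 - 1) := by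
  ext p
  simp only [phi, Finset.mem_union, Finset.mem_image, Finset.mem_filter]
  constructor
  · rintro (⟨q, ⟨hq, h1⟩, rfl⟩ | ⟨q, ⟨hq, h1⟩, rfl⟩)
    · exact ⟨q, hq, by simp [h1]⟩
    · exact ⟨q, hq, by simp [h1]⟩
  · rintro ⟨q, hq, rfl⟩
    by_cases h1 : q.1 = 1
    · exact Or.inl ⟨q, ⟨hq, h1⟩, by simp [h1]⟩
    · exact Or.inr ⟨q, ⟨hq, h1⟩, by simp [h1]⟩

lemma psi_phi (n : ℕ) (M : Finset (ℕ × ℕ))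
    (hb : ∀ p ∈ M, 1 ≤ p.1 ∧ p.1 < p.2 ∧ p.2 ≤ 2 * n) : psi n (phi n M) = M := by
  rw [phi_eq_image, psi, Finset.image_image]
  have h : ∀ p ∈ M, ((fun p : ℕ × ℕ => if p.2 = 2 * n then (1, p.1 + 1) else (p.1 + 1, p.2 + 1)) ∘
      fun p : ℕ × ℕ => if p.1 = 1 then (p.2 - 1, 2 * n) else (p.1 - 1, p.2 - 1)) p = id p := by
    rintro ⟨i, j⟩ hp
    obtain ⟨h1, h2, h3⟩ := hb _ hp
    simp only [Function.comp_apply, id_eq]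
    rcases eq_or_ne i 1 with hi | hi
    · rw [if_pos hi, if_pos (show ((j - 1 : ℕ), 2 * n).2 = 2 * n from rfl), Prod.mk.injEq]
      constructor <;> omega
    · rw [if_neg hi, if_neg (show ¬((i - 1 : ℕ), j - 1).2 = 2 * n by simp only [Prod.snd]; omega),
        Prod.mk.injEq]
      constructor <;> omega
  rw [Finset.image_congr h, Finset.image_id]

lemma phi_psi (n : ℕ) (M : Finset (ℕ × ℕ))
    (hb : ∀ p ∈ M, 1 ≤ p.1 ∧ p.1 < p.2 ∧ p.2 ≤ 2 * n) : phi n (psi n M) = M := by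
  rw [phi_eq_image, psi, Finset.image_image]
  have h : ∀ p ∈ M, ((fun p : ℕ × ℕ => if p.1 = 1 then (p.2 - 1, 2 * n) else (p.1 - 1, p.2 - 1)) ∘
      fun p : ℕ × ℕ => if p.2 = 2 * n then (1, p.1 + 1) else (p.1 + 1, p.2 + 1)) p = id p := by
    rintro ⟨i, j⟩ hp
    obtain ⟨h1, h2, h3⟩ := hb _ hp
    simp only [Function.comp, id]
    split_ifs <;> simp_all [Prod.ext_iff] <;> omega
  rw [Finset.image_congr h, Finset.image_id]

lemma phi_preserves (n : ℕ) (M : Finset (ℕ × ℕ)) (hM : IsNoncrossingMatching n M) :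
    IsNoncrossingMatching n (phi n M) := by
  obtain ⟨⟨hb, hu⟩, hnc⟩ := hM
  rw [phi_eq_image]
  refine ⟨⟨?_, ?_⟩, ?_⟩
  · rintro p hp
    rw [Finset.mem_image] at hp
    obtain ⟨⟨i, j⟩, hq, rfl⟩ := hp
    obtain ⟨h1, h2, h3⟩ := hb _ hq
    dsimp only
    split_ifs <;> dsimp <;> omega
  · intro k hk1 hk2
    by_cases hk : k = 2 * n
    · subst hk
      obtain ⟨⟨i, j⟩, ⟨hqM, hqk⟩, huniq⟩ := hu 1 le_rfl (by omega)
      obtain ⟨h1, h2, h3⟩ := hb _ hqM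
      dsimp only at hqk
      refine ⟨_, ⟨Finset.mem_image_of_mem _ hqM, ?_⟩, ?_⟩
      · dsimp only; split_ifs <;> dsimp <;> omega
      · rintro p' ⟨hp'mem, hp'k⟩
        rw [Finset.mem_image] at hp'mem
        obtain ⟨⟨i', j'⟩, hq'M, rfl⟩ := hp'mem
        obtain ⟨g1, g2, g3⟩ := hb _ hq'M
        have : (i', j') = (i, j) := by
          apply huniq
          refine ⟨hq'M, ?_⟩
          dsimp only at hp'k ⊢
          split_ifs at hp'k <;> dsimp at hp'k <;> omega
        rw [this]
    · obtain ⟨⟨i, j⟩, ⟨hqM, hqk⟩, huniq⟩ := hu (k + 1) (by omega) (by omega)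
      obtain ⟨h1, h2, h3⟩ := hb _ hqM
      dsimp only at hqk
      refine ⟨_, ⟨Finset.mem_image_of_mem _ hqM, ?_⟩, ?_⟩
      · dsimp only; split_ifs <;> dsimp <;> omega
      · rintro p' ⟨hp'mem, hp'k⟩
        rw [Finset.mem_image] at hp'mem
        obtain ⟨⟨i', j'⟩, hq'M, rfl⟩ := hp'mem
        obtain ⟨g1, g2, g3⟩ := hb _ hq'M
        have : (i', j') = (i, j) := by
          apply huniq
          refine ⟨hq'M, ?_⟩
          dsimp only at hp'k ⊢
          split_ifs at hp'k <;> dsimp at hp'k <;> omega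
        rw [this]
  · rintro ⟨a, b, c, d, hab, hbc, hcd, hac, hbd⟩
    rw [Finset.mem_image] at hac hbd
    obtain ⟨⟨i, j⟩, hqM, hq⟩ := hac
    obtain ⟨⟨i', j'⟩, hq'M, hq'⟩ := hbd
    obtain ⟨h1, h2, h3⟩ := hb _ hqM
    obtain ⟨g1, g2, g3⟩ := hb _ hq'M
    dsimp only at hq hq'
    by_cases h : i = 1
    · -- c = 2n, contradiction with c < d ≤ values
      rw [if_pos h, Prod.mk.injEq] at hq
      split_ifs at hq' <;> rw [Prod.mk.injEq] at hq' <;> omega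
    · by_cases h' : i' = 1
      · rw [if_neg h, Prod.mk.injEq] at hq
        rw [if_pos h', Prod.mk.injEq] at hq'
        exact hnc ⟨i', i, j', j, by omega, by omega, by omega, hq'M, hqM⟩
      · rw [if_neg h, Prod.mk.injEq] at hq
        rw [if_neg h', Prod.mk.injEq] at hq'
        exact hnc ⟨i, i', j, j', by omega, by omega, by omega, hqM, hq'M⟩

lemma psi_preserves (n : ℕ) (M : Finset (ℕ × ℕ)) (hM : IsNoncrossingMatching n M) :
    IsNoncrossingMatching n (psi n M) := by
  obtain ⟨⟨hb, hu⟩, hnc⟩ := hM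
  rw [psi]
  refine ⟨⟨?_, ?_⟩, ?_⟩
  · rintro p hp
    rw [Finset.mem_image] at hp
    obtain ⟨⟨i, j⟩, hq, rfl⟩ := hp
    obtain ⟨h1, h2, h3⟩ := hb _ hq
    dsimp only
    split_ifs <;> dsimp <;> omega
  · intro k hk1 hk2
    by_cases hk : k = 1
    · subst hk
      obtain ⟨⟨i, j⟩, ⟨hqM, hqk⟩, huniq⟩ := hu (2 * n) (by omega) le_rfl
      obtain ⟨h1, h2, h3⟩ := hb _ hqM
      dsimp only at hqk
      refine ⟨_, ⟨Finset.mem_image_of_mem _ hqM, ?_⟩, ?_⟩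
      · dsimp only; split_ifs <;> dsimp <;> omega
      · rintro p' ⟨hp'mem, hp'k⟩
        rw [Finset.mem_image] at hp'mem
        obtain ⟨⟨i', j'⟩, hq'M, rfl⟩ := hp'mem
        obtain ⟨g1, g2, g3⟩ := hb _ hq'M
        have : (i', j') = (i, j) := by
          apply huniq
          refine ⟨hq'M, ?_⟩
          dsimp only at hp'k ⊢
          split_ifs at hp'k <;> dsimp at hp'k <;> omega
        rw [this]
    · obtain ⟨⟨i, j⟩, ⟨hqM, hqk⟩, huniq⟩ := hu (k - 1) (by omega) (by omega)
      obtain ⟨h1, h2, h3⟩ := hb _ hqM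
      dsimp only at hqk
      refine ⟨_, ⟨Finset.mem_image_of_mem _ hqM, ?_⟩, ?_⟩
      · dsimp only; split_ifs <;> dsimp <;> omega
      · rintro p' ⟨hp'mem, hp'k⟩
        rw [Finset.mem_image] at hp'mem
        obtain ⟨⟨i', j'⟩, hq'M, rfl⟩ := hp'mem
        obtain ⟨g1, g2, g3⟩ := hb _ hq'M
        have : (i', j') = (i, j) := by
          apply huniq
          refine ⟨hq'M, ?_⟩
          dsimp only at hp'k ⊢
          split_ifs at hp'k <;> dsimp at hp'k <;> omega
        rw [this]
  · rintro ⟨a, b, c, d, hab, hbc, hcd, hac, hbd⟩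
    rw [Finset.mem_image] at hac hbd
    obtain ⟨⟨i, j⟩, hqM, hq⟩ := hac
    obtain ⟨⟨i', j'⟩, hq'M, hq'⟩ := hbd
    obtain ⟨h1, h2, h3⟩ := hb _ hqM
    obtain ⟨g1, g2, g3⟩ := hb _ hq'M
    dsimp only at hq hq'
    by_cases h' : j' = 2 * n
    · -- b = 1, contradiction with a < b, a ≥ 1
      rw [if_pos h', Prod.mk.injEq] at hq'
      split_ifs at hq <;> rw [Prod.mk.injEq] at hq <;> omega
    · by_cases h : j = 2 * n
      · rw [if_pos h, Prod.mk.injEq] at hq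
        rw [if_neg h', Prod.mk.injEq] at hq'
        exact hnc ⟨i', i, j', j, by omega, by omega, by omega, hq'M, hqM⟩
      · rw [if_neg h, Prod.mk.injEq] at hq
        rw [if_neg h', Prod.mk.injEq] at hq'
        exact hnc ⟨i, i', j, j', by omega, by omega, by omega, hqM, hq'M⟩

/-- The cyclic shift `φ` is a bijection from the set of plane trees with `n`
edges (encoded as noncrossing perfect matchings on `{1,…,2n}`) to itself. -/
theorem phi_bijOn (n : ℕ) :
    Set.BijOn (phi n) {M : Finset (ℕ × ℕ) | IsNoncrossingMatching n M}
      {M : Finset (ℕ × ℕ) | IsNoncrossingMatching n M} := by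

  refine ⟨fun M hM => phi_preserves n M hM, ?_, ?_⟩
  · intro M hM M' hM' h
    have := psi_phi n M hM.1.1
    rw [h, psi_phi n M' hM'.1.1] at this
    exact this.symm
  · intro M hM
    exact ⟨psi n M, psi_preserves n M hM, phi_psi n M hM.1.1⟩
end

section
/- The Kreweras complementation map κ on the lattice NC(n) of noncrossing partitions satisfies κ^{2n} = identity. -/
/-- A partition of `{1,…,n}` (as `Fin n`) is noncrossing if there are no
`a < b < c < d` with `a, c` in one block and `b, d` in a different block. -/
def IsNoncrossing {n : ℕ} (P : Finpartition (Finset.univ : Finset (Fin n))) : Prop :=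
  ¬ ∃ a b c d : Fin n, a < b ∧ b < c ∧ c < d ∧
    P.part a = P.part c ∧ P.part b = P.part d ∧ P.part a ≠ P.part b

/-- The set `NC(n)` of noncrossing partitions of `{1,…,n}`. -/
abbrev NCP (n : ℕ) := {P : Finpartition (Finset.univ : Finset (Fin n)) // IsNoncrossing P}

/-- In the interleaved order `1 < 1' < 2 < 2' < … < n < n'` (element `i` of the
first copy sits at position `2i`, of the second copy at position `2i+1`),
positions `x` and `y` lie in the same block of the union `P ∪ Q`, where `P`
lives on the first copy and `Q` on the second. -/
def JointSame {n : ℕ} (P Q : Finpartition (Finset.univ : Finset (Fin n))) (x y : ℕ) : Prop :=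
  ∃ i j : Fin n,
    (x = 2 * i.val ∧ y = 2 * j.val ∧ P.part i = P.part j) ∨
    (x = 2 * i.val + 1 ∧ y = 2 * j.val + 1 ∧ Q.part i = Q.part j)

/-- `P ∪ Q` is a noncrossing partition of the interleaved totally ordered set. -/
def JointNoncrossing {n : ℕ} (P Q : Finpartition (Finset.univ : Finset (Fin n))) : Prop :=
  ¬ ∃ a b c d : ℕ, a < b ∧ b < c ∧ c < d ∧
    JointSame P Q a c ∧ JointSame P Q b d ∧ ¬ JointSame P Q a b

/-- `k` is the Kreweras complementation map on `NC(n)`: `k P` is the coarsest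
noncrossing partition on the second copy of `{1,…,n}` such that `P ∪ k P` is
noncrossing on the interleaved set. -/
def IsKreweras {n : ℕ} (k : NCP n → NCP n) : Prop :=
  ∀ P : NCP n, JointNoncrossing P.1 (k P).1 ∧
    ∀ Q : NCP n, JointNoncrossing P.1 Q.1 → Q.1 ≤ (k P).1

/-!
Writing `i'` just after `i`, the points `i'` and `j'` can share a block of a noncrossing `P ∪ Q`
exactly when the points of the first copy strictly between them form a union of blocks of `P`.
This relation is an equivalence whose classes form a noncrossing partition, jointly noncrossing
with `P` and coarser than every `Q` with `P ∪ Q` noncrossing, so it is `κ P`. Applying the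
description twice, `i` and `j` share a block of `κ² P` iff `i + 1` and `j + 1` share a block of
`P` (indices mod `n`). If they do, an arc `(x, y]` with `x ∈ (i, j]` and `y ∉ (i, j]` separates
`i + 1` from `j + 1`, so it is not a union of blocks. Conversely, if `w` is the cyclic predecessor
of `j + 1` in its block, noncrossingness makes the gap between them a union of blocks, so `w'`
and `j'` share a block of `κ P`; this forces `i < w ≤ j`, and induction from `w - 1` down to `i`
finishes. So `κ²` is rotation by one, and `κ^{2n} = id`.
-/

theorem Finpartition.le_of_part_eq_imp {α : Type*} [Fintype α] [DecidableEq α]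
    {P Q : Finpartition (Finset.univ : Finset α)}
    (h : ∀ a b, P.part a = P.part b → Q.part a = Q.part b) : P ≤ Q := by
  intro t ht
  obtain ⟨a, ha⟩ := P.nonempty_of_mem_parts ht
  refine ⟨Q.part a, Q.part_mem.2 (Finset.mem_univ a), fun b hb => ?_⟩
  rw [Q.mem_part_iff_part_eq_part (Finset.mem_univ b) (Finset.mem_univ a)]
  exact h b a ((P.part_eq_of_mem ht hb).trans (P.part_eq_of_mem ht ha).symm)

def Finpartition.IsSaturated {α : Type*} [Fintype α] [DecidableEq α]
    (P : Finpartition (Finset.univ : Finset α)) (s : Set α) : Prop :=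
  ∀ a b, P.part a = P.part b → a ∈ s → b ∈ s

namespace Finpartition.IsSaturated

open scoped symmDiff

variable {α : Type*} [Fintype α] [DecidableEq α] {P : Finpartition (Finset.univ : Finset α)}
  {s t : Set α}

theorem mem_iff (hs : P.IsSaturated s) {a b : α} (h : P.part a = P.part b) : a ∈ s ↔ b ∈ s :=
  ⟨hs a b h, hs b a h.symm⟩

theorem compl (hs : P.IsSaturated s) : P.IsSaturated sᶜ :=
  fun _ _ h ha hb => ha (hs.mem_iff h |>.2 hb)

theorem symmDiff (hs : P.IsSaturated s) (ht : P.IsSaturated t) : P.IsSaturated (s ∆ t) := by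
  intro a b h
  simp only [Set.mem_symmDiff, hs.mem_iff h, ht.mem_iff h, imp_self]

theorem diff (hs : P.IsSaturated s) (ht : P.IsSaturated t) : P.IsSaturated (s \ t) :=
  fun a b h ha => ⟨hs a b h ha.1, fun hb => ha.2 (ht.mem_iff h |>.2 hb)⟩

end Finpartition.IsSaturated

open Finpartition
open scoped symmDiff

theorem Fin.add_one_le_iff_le_iff_eq_last {n : ℕ} (u x : Fin (n + 1)) :
    u + 1 ≤ x ↔ (x ≤ u ↔ u = Fin.last n) := by
  rcases eq_or_ne u (Fin.last n) with rfl | hu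
  · simp [Fin.le_last]
  · rw [Fin.le_iff_val_le_val, Fin.le_iff_val_le_val,
      Fin.val_add_one_of_lt (Fin.lt_last_iff_ne_last.2 hu)]
    simp only [hu, iff_false]
    omega

theorem Fin.add_one_le_iff_of_ne_last {n : ℕ} {u : Fin (n + 1)} (hu : u ≠ Fin.last n)
    (x : Fin (n + 1)) : u + 1 ≤ x ↔ u < x := by
  simp [Fin.add_one_le_iff_le_iff_eq_last, hu]

theorem Fin.lt_add_one_iff_of_ne_last {n : ℕ} {u : Fin (n + 1)} (hu : u ≠ Fin.last n)
    (x : Fin (n + 1)) : x < u + 1 ↔ x ≤ u := by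
  rw [← not_le, Fin.add_one_le_iff_of_ne_last hu, not_lt]

theorem Set.mem_Iic_symmDiff_Iic_iff {α : Type*} [LinearOrder α] {a b x : α} :
    x ∈ Set.Iic a ∆ Set.Iic b ↔ ¬(x ≤ a ↔ x ≤ b) := by
  simp only [Set.mem_symmDiff, Set.mem_Iic]
  tauto

theorem Fin.add_one_mem_Iic_symmDiff_Iic_iff {n : ℕ} {u x y : Fin (n + 1)} :
    u + 1 ∈ Set.Iic x ∆ Set.Iic y ↔ ¬(x ≤ u ↔ y ≤ u) := by
  simp only [Set.mem_Iic_symmDiff_Iic_iff, Fin.add_one_le_iff_le_iff_eq_last]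
  tauto

variable {n : ℕ} {P Q : Finpartition (Finset.univ : Finset (Fin n))}

theorem IsNoncrossing.part_eq (hP : IsNoncrossing P) {a b c d : Fin n}
    (hab : a < b) (hbc : b < c) (hcd : c < d)
    (hac : P.part a = P.part c) (hbd : P.part b = P.part d) : P.part a = P.part b :=
  by_contra fun h => hP ⟨a, b, c, d, hab, hbc, hcd, hac, hbd, h⟩

theorem JointSame.mod_two_eq {x y : ℕ} (h : JointSame P Q x y) : x % 2 = y % 2 := by
  obtain ⟨i, j, ⟨rfl, rfl, -⟩ | ⟨rfl, rfl, -⟩⟩ := h <;> omega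

/-- For `i ≤ j` the set `Iic i ∆ Iic j` is `Ioc i j`, the points strictly between `i'` and `j'`;
written as a symmetric difference, symmetry and transitivity come for free, since unions of
blocks are closed under `∆`. -/
def krewerasRel (P : Finpartition (Finset.univ : Finset (Fin n))) (i j : Fin n) : Prop :=
  P.IsSaturated (Set.Iic i ∆ Set.Iic j)

theorem krewerasRel_iff_of_le {i j : Fin n} (h : i ≤ j) :
    krewerasRel P i j ↔ P.IsSaturated (Set.Ioc i j) := by
  rw [krewerasRel, symmDiff_of_le (Set.Iic_subset_Iic.2 h), Set.Iic_sdiff_Iic]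

theorem krewerasRel.symm {i j : Fin n} (h : krewerasRel P i j) : krewerasRel P j i := by
  rwa [krewerasRel, symmDiff_comm]

theorem krewerasRel.trans {i j l : Fin n} (hij : krewerasRel P i j) (hjl : krewerasRel P j l) :
    krewerasRel P i l := by
  have := IsSaturated.symmDiff hij hjl
  rwa [symmDiff_assoc, symmDiff_symmDiff_cancel_left] at this

def krewerasSetoid (P : Finpartition (Finset.univ : Finset (Fin n))) : Setoid (Fin n) where
  r := krewerasRel P
  iseqv := ⟨fun i => by simp [krewerasRel, IsSaturated], krewerasRel.symm, krewerasRel.trans⟩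

open Classical in
noncomputable def kreweras (P : Finpartition (Finset.univ : Finset (Fin n))) :
    Finpartition (Finset.univ : Finset (Fin n)) :=
  Finpartition.ofSetoid (krewerasSetoid P)

theorem part_kreweras_eq_iff {i j : Fin n} :
    (kreweras P).part i = (kreweras P).part j ↔ krewerasRel P i j := by
  classical
  rw [← (kreweras P).mem_part_iff_part_eq_part (Finset.mem_univ i) (Finset.mem_univ j), kreweras,
    mem_part_ofSetoid_iff_rel]
  exact ⟨krewerasRel.symm, krewerasRel.symm⟩

theorem isNoncrossing_kreweras (P : Finpartition (Finset.univ : Finset (Fin n))) :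
    IsNoncrossing (kreweras P) := by
  rintro ⟨a, b, c, d, hab, hbc, hcd, hac, hbd, hne⟩
  rw [part_kreweras_eq_iff, krewerasRel_iff_of_le (hab.trans hbc).le] at hac
  rw [part_kreweras_eq_iff, krewerasRel_iff_of_le (hbc.trans hcd).le] at hbd
  refine hne (part_kreweras_eq_iff.2 ((krewerasRel_iff_of_le hab.le).2 ?_))
  convert hac.diff hbd using 1
  ext x
  simp only [Set.mem_Ioc, Set.mem_sdiff]
  fin_omega

theorem jointNoncrossing_kreweras (hP : IsNoncrossing P) : JointNoncrossing P (kreweras P) := by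
  rintro ⟨a, b, c, d, hab, hbc, hcd, ⟨i, j, ⟨rfl, rfl, hij⟩ | ⟨rfl, rfl, hij⟩⟩,
    ⟨p, q, ⟨rfl, rfl, hpq⟩ | ⟨rfl, rfl, hpq⟩⟩, hnab⟩
  · exact hnab ⟨i, p, .inl ⟨rfl, rfl, hP.part_eq (by fin_omega) (by fin_omega) (by fin_omega)
      hij hpq⟩⟩
  · have hpq := (krewerasRel_iff_of_le (by fin_omega)).1 (part_kreweras_eq_iff.1 hpq)
    have := hpq j i hij.symm ⟨by fin_omega, by fin_omega⟩
    exact absurd this.1 (by fin_omega)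
  · have hij := (krewerasRel_iff_of_le (by fin_omega)).1 (part_kreweras_eq_iff.1 hij)
    have := hij p q hpq ⟨by fin_omega, by fin_omega⟩
    exact absurd this.2 (by fin_omega)
  · exact hnab ⟨i, p, .inr ⟨rfl, rfl, (isNoncrossing_kreweras P).part_eq (by fin_omega)
      (by fin_omega) (by fin_omega) hij hpq⟩⟩

theorem krewerasRel_of_jointNoncrossing (h : JointNoncrossing P Q) {i j : Fin n} (hij : i ≤ j)
    (hQ : Q.part i = Q.part j) : krewerasRel P i j := by
  rw [krewerasRel_iff_of_le hij]
  rintro x y hxy ⟨hix, hxj⟩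
  have hi : JointSame P Q (2 * i + 1) (2 * j + 1) := ⟨i, j, .inr ⟨rfl, rfl, hQ⟩⟩
  have hx : JointSame P Q (2 * x) (2 * y) := ⟨x, y, .inl ⟨rfl, rfl, hxy⟩⟩
  by_contra hy
  rcases le_or_gt y i with hyi | hjy
  · exact h ⟨2 * y, 2 * i + 1, 2 * x, 2 * j + 1, by fin_omega, by fin_omega, by fin_omega,
      ⟨y, x, .inl ⟨rfl, rfl, hxy.symm⟩⟩, hi, fun h' => by have := h'.mod_two_eq; omega⟩
  · have hyj : j < y := not_le.1 fun hyj => hy ⟨hjy, hyj⟩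
    exact h ⟨2 * i + 1, 2 * x, 2 * j + 1, 2 * y, by fin_omega, by fin_omega, by fin_omega,
      hi, hx, fun h' => by have := h'.mod_two_eq; omega⟩

theorem le_kreweras_of_jointNoncrossing (h : JointNoncrossing P Q) : Q ≤ kreweras P := by
  refine le_of_part_eq_imp fun i j hQ => part_kreweras_eq_iff.2 ?_
  rcases le_total i j with hij | hji
  · exact krewerasRel_of_jointNoncrossing h hij hQ
  · exact (krewerasRel_of_jointNoncrossing h hji hQ.symm).symm

theorem IsKreweras.val_eq {k : NCP n → NCP n} (hk : IsKreweras k) (P : NCP n) :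
    (k P).1 = kreweras P.1 :=
  le_antisymm (le_kreweras_of_jointNoncrossing (hk P).1)
    ((hk P).2 ⟨_, isNoncrossing_kreweras P.1⟩ (jointNoncrossing_kreweras P.2))

theorem IsNoncrossing.isSaturated_Ioo (hP : IsNoncrossing P) {a b : Fin n}
    (hab : P.part a = P.part b) (hgap : ∀ x ∈ Set.Ioo a b, P.part x ≠ P.part a) :
    P.IsSaturated (Set.Ioo a b) := by
  rintro x y hxy ⟨hax, hxb⟩
  have hxa := hgap x ⟨hax, hxb⟩
  by_contra hy
  rcases lt_trichotomy y a with hya | rfl | hay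
  · exact hxa (hxy.trans (hP.part_eq hya hax hxb hxy.symm hab))
  · exact hxa hxy
  rcases lt_trichotomy y b with hyb | rfl | hby
  · exact hy ⟨hay, hyb⟩
  · exact hxa (hxy.trans hab.symm)
  · exact hxa (hP.part_eq hax hxb hby hab hxy).symm

theorem IsNoncrossing.isSaturated_Icc (hP : IsNoncrossing P) {a b : Fin n}
    (hab : P.part a = P.part b) (hspan : ∀ x, P.part x = P.part a → x ∈ Set.Icc a b) :
    P.IsSaturated (Set.Icc a b) := by
  rintro x y hxy ⟨hax, hxb⟩
  by_cases hxa : P.part x = P.part a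
  · exact hspan y (hxy.symm.trans hxa)
  replace hax : a < x := hax.lt_of_ne (by rintro rfl; exact hxa rfl)
  replace hxb : x < b := hxb.lt_of_ne (by rintro rfl; exact hxa hab.symm)
  by_contra hy
  rcases lt_or_ge y a with hya | hay
  · exact hxa (hxy.trans (hP.part_eq hya hax hxb hxy.symm hab))
  · have hby : b < y := not_le.1 fun hyb => hy ⟨hay, hyb⟩
    exact hxa (hP.part_eq hax hxb hby hab hxy).symm

section Rotation

variable {P : Finpartition (Finset.univ : Finset (Fin (n + 1)))}

/-- `w` is the cyclic predecessor of `j + 1` in its block. -/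
theorem IsNoncrossing.exists_part_eq_part_add_one_krewerasRel (hP : IsNoncrossing P)
    (j : Fin (n + 1)) : ∃ w, P.part w = P.part (j + 1) ∧ krewerasRel P w j := by
  classical
  have mem_iff (x : Fin (n + 1)) : x ∈ P.part (j + 1) ↔ P.part x = P.part (j + 1) :=
    P.mem_part_iff_part_eq_part (Finset.mem_univ x) (Finset.mem_univ _)
  by_cases hlow : ((P.part (j + 1)).filter (· ≤ j)).Nonempty ∧ j ≠ Fin.last n
  · obtain ⟨hS, hj⟩ := hlow
    obtain ⟨w, hwD, hwj, hwmax⟩ : ∃ w, P.part w = P.part (j + 1) ∧ w ≤ j ∧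
        ∀ x, P.part x = P.part (j + 1) → x ≤ j → x ≤ w := by
      obtain ⟨hwD, hwj⟩ := Finset.mem_filter.1 (Finset.max'_mem _ hS)
      exact ⟨_, (mem_iff _).1 hwD, hwj, fun x hx hxj =>
        Finset.le_max' _ x (Finset.mem_filter.2 ⟨(mem_iff x).2 hx, hxj⟩)⟩
    refine ⟨w, hwD, (krewerasRel_iff_of_le hwj).2 ?_⟩
    have hIoc : Set.Ioc w j = Set.Ioo w (j + 1) := by
      ext x
      simp [Fin.lt_add_one_iff_of_ne_last hj]
    rw [hIoc]
    exact hP.isSaturated_Ioo hwD fun x ⟨hwx, hxj⟩ hxw => not_le.2 hwx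
      (hwmax x (hxw.trans hwD) ((Fin.lt_add_one_iff_of_ne_last hj x).1 hxj))
  · have hmin (x : Fin (n + 1)) (hx : P.part x = P.part (j + 1)) : j + 1 ≤ x := by
      rw [Fin.add_one_le_iff_le_iff_eq_last]
      refine ⟨fun hxj => ?_, fun hj => hj ▸ Fin.le_last x⟩
      by_contra hj
      exact hlow ⟨⟨x, Finset.mem_filter.2 ⟨(mem_iff x).2 hx, hxj⟩⟩, hj⟩
    obtain ⟨e, heD, hemax⟩ : ∃ e, P.part e = P.part (j + 1) ∧
        ∀ x, P.part x = P.part (j + 1) → x ≤ e :=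
      ⟨_, (mem_iff _).1 (Finset.max'_mem _ ⟨j + 1, P.mem_part (Finset.mem_univ _)⟩),
        fun x hx => Finset.le_max' _ x ((mem_iff x).2 hx)⟩
    have hsat := hP.isSaturated_Icc heD.symm fun x hx => ⟨hmin x hx, hemax x hx⟩
    refine ⟨e, heD, ?_⟩
    rcases eq_or_ne j (Fin.last n) with rfl | hj
    · rw [krewerasRel]
      convert hsat.compl using 2
      ext x
      simp [Set.mem_symmDiff, Fin.le_last]
    · have hje := (Fin.add_one_le_iff_of_ne_last hj e).1 (hmin e heD)
      refine ((krewerasRel_iff_of_le hje.le).2 ?_).symm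
      convert hsat using 2
      ext x
      simp [Fin.add_one_le_iff_of_ne_last hj]

theorem krewerasRel_kreweras_of_part_add_one_eq {i j : Fin (n + 1)}
    (h : P.part (i + 1) = P.part (j + 1)) : krewerasRel (kreweras P) i j := by
  intro x y hxy hx
  -- `i + 1` and `j + 1` share a block of `P`, yet exactly one of them lies in `Iic x ∆ Iic y`.
  have hT := (part_kreweras_eq_iff.1 hxy).mem_iff h
  rw [Fin.add_one_mem_Iic_symmDiff_Iic_iff, Fin.add_one_mem_Iic_symmDiff_Iic_iff] at hT
  rw [Set.mem_Iic_symmDiff_Iic_iff] at hx ⊢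
  tauto

theorem IsNoncrossing.part_add_one_eq_of_krewerasRel_kreweras (hP : IsNoncrossing P)
    {i j : Fin (n + 1)} (hij : i ≤ j) (h : krewerasRel (kreweras P) i j) :
    P.part (i + 1) = P.part (j + 1) := by
  induction j using WellFoundedLT.induction with
  | _ j ih =>
  rcases hij.eq_or_lt with rfl | hij
  · rfl
  obtain ⟨w, hw, hwj⟩ := hP.exists_part_eq_part_add_one_krewerasRel j
  have hiw : w ∈ Set.Ioc i j :=
    (krewerasRel_iff_of_le hij.le).1 h j w (part_kreweras_eq_iff.2 hwj.symm) ⟨hij, le_rfl⟩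
  obtain ⟨v, rfl⟩ : ∃ v, w = v + 1 := ⟨w - 1, (sub_add_cancel w 1).symm⟩
  have hv : v ≠ Fin.last n := by
    rintro rfl
    simp [Fin.last_add_one] at hiw
  obtain ⟨hiv, hvj⟩ := hiw
  rw [Fin.lt_add_one_iff_of_ne_last hv] at hiv
  rw [Fin.add_one_le_iff_of_ne_last hv] at hvj
  exact (ih v hvj hiv (h.trans (krewerasRel_kreweras_of_part_add_one_eq hw).symm)).trans hw

theorem IsNoncrossing.part_kreweras_kreweras_eq_iff (hP : IsNoncrossing P) {i j : Fin (n + 1)} :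
    (kreweras (kreweras P)).part i = (kreweras (kreweras P)).part j ↔
      P.part (i + 1) = P.part (j + 1) := by
  rw [part_kreweras_eq_iff]
  refine ⟨fun h => ?_, krewerasRel_kreweras_of_part_add_one_eq⟩
  rcases le_total i j with hij | hji
  · exact hP.part_add_one_eq_of_krewerasRel_kreweras hij h
  · exact (hP.part_add_one_eq_of_krewerasRel_kreweras hji h.symm).symm

open Fin.NatCast in
theorem IsKreweras.part_iterate_two_mul_eq_iff {k : NCP (n + 1) → NCP (n + 1)}
    (hk : IsKreweras k) (m : ℕ) (P : NCP (n + 1)) (i j : Fin (n + 1)) :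
    (k^[2 * m] P).1.part i = (k^[2 * m] P).1.part j ↔ P.1.part (i + m) = P.1.part (j + m) := by
  induction m generalizing P i j with
  | zero => simp
  | succ m ih =>
    have hk2 : (k^[2] P).1 = kreweras (kreweras P.1) := by
      rw [Function.iterate_succ_apply', Function.iterate_one, hk.val_eq, hk.val_eq]
    rw [mul_add, mul_one, Function.iterate_add_apply, ih, hk2, P.2.part_kreweras_kreweras_eq_iff,
      Nat.cast_succ, add_assoc, add_assoc]

end Rotation

/-- The Kreweras complementation map `κ` on `NC(n)` satisfies `κ^{2n} = id`. -/
theorem kreweras_iterate_two_n (n : ℕ) (k : NCP n → NCP n) (hk : IsKreweras k)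
    (P : NCP n) : k^[2 * n] P = P := by
  cases n with
  | zero => rfl
  | succ n =>
    have h := hk.part_iterate_two_mul_eq_iff (n + 1) P
    simp only [Fin.natCast_self, add_zero] at h
    exact Subtype.ext (le_antisymm (le_of_part_eq_imp fun i j => (h i j).1)
      (le_of_part_eq_imp fun i j => (h i j).2))
end

section
/- For every plane tree T with n edges (encoded as a noncrossing perfect matching on {1,...,2n}), the matchings T and φ(T) form a meander: drawing T above and φ(T) below a line on the same 2n endpoints yields a single closed loop. -/
/-- Adjacency via a chord set: `a` and `b` are joined by a chord of `S`. -/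
def ChordAdj (S : Finset (ℕ × ℕ)) (a b : ℕ) : Prop := (a, b) ∈ S ∨ (b, a) ∈ S

/-- Connectivity via chords of `S`. -/
def ChordConn (S : Finset (ℕ × ℕ)) (a b : ℕ) : Prop :=
  Relation.ReflTransGen (ChordAdj S) a b

/-- Two noncrossing perfect matchings on `{1,…,2n}` form a meander: drawing one
above and one below the line yields a single closed loop, i.e. the union of
their chords connects all `2n` points. -/
def FormMeander (n : ℕ) (M M' : Finset (ℕ × ℕ)) : Prop :=
  ∀ k l : ℕ, 1 ≤ k → k ≤ 2 * n → 1 ≤ l → l ≤ 2 * n → ChordConn (M ∪ M') k l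

/-- The least period of `x` under `f` is `l`. -/
def OrbitLen {α : Type*} (f : α → α) (x : α) (l : ℕ) : Prop :=
  0 < l ∧ f^[l] x = x ∧ ∀ m : ℕ, 0 < m → f^[m] x = x → l ≤ m

/-!
Every label is joined to `1` by chords of `T ∪ φ(T)`. Away from the label `1`, `φ` shifts each
chord `(a, b)` of `T` to `(a - 1, b - 1)`. In a forest labelled from `i + 1`, the shift of the
first edge's chord joins `i` to the last label of the first subtree, which by induction is
joined to `i + 1`; the chord itself joins the first subtree to the rest of the forest. For the
whole tree the shifted first chord is missing, but only the unshifted one is needed there.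
-/

namespace PlaneTree

@[simp]
theorem edges_node_s9 (ts : List PlaneTree) :
    (node ts).edges = (ts.map fun t => t.edges + 1).sum := by
  rw [edges, List.map_attach_eq_pmap]
  simp [List.pmap_eq_map]

theorem edges_node_cons_s9 (t : PlaneTree) (ts : List PlaneTree) :
    (node (t :: ts)).edges = t.edges + 1 + (node ts).edges := by
  simp

end PlaneTree

open PlaneTree

theorem le_fst_of_mem_matchList : ∀ (ts : List PlaneTree) (i : ℕ), ∀ p ∈ matchList i ts, i ≤ p.1
  | [], _ => by simp [matchList]
  | node cs :: ts, i => by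
    intro p hp
    rw [matchList, Finset.mem_insert, Finset.mem_union] at hp
    rcases hp with rfl | hp | hp
    · exact le_rfl
    · exact (le_fst_of_mem_matchList cs (i + 1) p hp).trans' (Nat.le_succ i)
    · exact (le_fst_of_mem_matchList ts _ p hp).trans' (by omega)
termination_by ts => sizeOf ts

section ChordConn

variable {S : Finset (ℕ × ℕ)} {a b c : ℕ}

theorem ChordConn.of_mem (h : (a, b) ∈ S) : ChordConn S a b :=
  .single (Or.inl h)

theorem ChordConn.symm (h : ChordConn S a b) : ChordConn S b a :=
  haveI : Std.Symm (ChordAdj S) := ⟨fun _ _ h => h.symm⟩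
  Std.Symm.symm (r := Relation.ReflTransGen (ChordAdj S)) _ _ h

theorem ChordConn.trans (hab : ChordConn S a b) (hbc : ChordConn S b c) : ChordConn S a c :=
  Relation.ReflTransGen.trans hab hbc

theorem chordConn_Icc_of_mem (hab : (a, b) ∈ S)
    (h₁ : ∀ k ∈ Set.Ico a b, ChordConn S a k) (h₂ : ∀ k ∈ Set.Icc b c, ChordConn S b k) :
    ∀ k ∈ Set.Icc a c, ChordConn S a k := by
  rintro k ⟨hak, hkc⟩
  rcases lt_or_ge k b with hkb | hbk
  · exact h₁ k ⟨hak, hkb⟩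
  · exact (ChordConn.of_mem hab).trans (h₂ k ⟨hbk, hkc⟩)

theorem formMeander_of_chordConn {n : ℕ} {M M' : Finset (ℕ × ℕ)}
    (h : ∀ k ∈ Set.Icc 1 (2 * n), ChordConn (M ∪ M') c k) : FormMeander n M M' := by
  intro k l hk₁ hk₂ hl₁ hl₂
  exact (h k ⟨hk₁, hk₂⟩).symm.trans (h l ⟨hl₁, hl₂⟩)

end ChordConn

theorem chordConn_Icc_of_shift_mem : ∀ (ts : List PlaneTree) (i : ℕ) (S : Finset (ℕ × ℕ)),
    (∀ p ∈ matchList (i + 1) ts, p ∈ S ∧ (p.1 - 1, p.2 - 1) ∈ S) →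
    ∀ k ∈ Set.Icc i (i + 2 * (node ts).edges), ChordConn S i k
  | [], i, S => by
    rintro - k ⟨hik, hki⟩
    obtain rfl : k = i := by simp at hki; omega
    exact .refl
  | node cs :: ts, i, S => by
    intro hS
    rw [matchList] at hS
    have hcs : ∀ p ∈ matchList (i + 1 + 1) cs, p ∈ S ∧ (p.1 - 1, p.2 - 1) ∈ S :=
      fun p hp => hS p (Finset.mem_insert_of_mem (Finset.mem_union_left _ hp))
    have hts : ∀ p ∈ matchList (i + 1 + 2 * (node cs).edges + 1 + 1) ts,
        p ∈ S ∧ (p.1 - 1, p.2 - 1) ∈ S :=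
      fun p hp => hS p (Finset.mem_insert_of_mem (Finset.mem_union_right _ hp))
    obtain ⟨hchord, hshift⟩ := hS _ (Finset.mem_insert_self _ _)
    have conn_cs := chordConn_Icc_of_shift_mem cs (i + 1) S hcs
    have conn_succ : ∀ k ∈ Set.Icc (i + 1) (i + 2 * (node (node cs :: ts)).edges),
        ChordConn S (i + 1) k := by
      rw [edges_node_cons_s9]
      exact chordConn_Icc_of_mem hchord (fun k hk => conn_cs k ⟨hk.1, Nat.le_of_lt_succ hk.2⟩)
        (fun k hk => chordConn_Icc_of_shift_mem ts _ S hts k ⟨hk.1, by grind⟩)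
    have hi : ChordConn S i (i + 1) :=
      (ChordConn.of_mem hshift).trans (conn_cs _ ⟨by omega, by omega⟩).symm
    rintro k ⟨hik, hki⟩
    rcases hik.eq_or_lt with rfl | hik
    · exact .refl
    · exact hi.trans (conn_succ k ⟨hik, hki⟩)
termination_by ts => sizeOf ts

theorem shift_mem_union_phi {n i : ℕ} {M : Finset (ℕ × ℕ)} {ts : List PlaneTree} (hi : 1 ≤ i)
    (hM : matchList (i + 1) ts ⊆ M) :
    ∀ p ∈ matchList (i + 1) ts, p ∈ M ∪ phi n M ∧ (p.1 - 1, p.2 - 1) ∈ M ∪ phi n M := by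
  intro p hp
  have hp1 : p.1 ≠ 1 := by have := le_fst_of_mem_matchList ts _ p hp; omega
  refine ⟨Finset.mem_union_left _ (hM hp), Finset.mem_union_right _ ?_⟩
  exact Finset.mem_union_right _ (Finset.mem_image_of_mem _ (Finset.mem_filter.2 ⟨hM hp, hp1⟩))

/-- A plane tree `T` with `n` edges and its shift `φ(T)` form a meander. -/
theorem phi_meander (n : ℕ) (T : PlaneTree) (hT : T.edges = n) :
    FormMeander n T.toMatching (phi n T.toMatching) := by
  obtain ⟨_ | ⟨⟨cs⟩, ts⟩⟩ := T
  · exact formMeander_of_chordConn (c := 0) fun k hk => by simp [← hT] at hk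
  have hM : (node (node cs :: ts)).toMatching = insert (1, 1 + 2 * (node cs).edges + 1)
      (matchList (1 + 1) cs ∪ matchList (1 + 2 * (node cs).edges + 1 + 1) ts) := by
    rw [toMatching, matchList]
  rw [edges_node_cons_s9] at hT
  have hchord : (1, 1 + 2 * (node cs).edges + 1) ∈ (node (node cs :: ts)).toMatching := by
    rw [hM]
    exact Finset.mem_insert_self _ _
  refine formMeander_of_chordConn
    (chordConn_Icc_of_mem (Finset.mem_union_left _ hchord) (fun k hk => ?_) (fun k hk => ?_))
  · refine chordConn_Icc_of_shift_mem cs 1 _ (shift_mem_union_phi le_rfl ?_) k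
      ⟨hk.1, Nat.le_of_lt_succ hk.2⟩
    rw [hM]
    exact Finset.subset_union_left.trans (Finset.subset_insert _ _)
  · refine chordConn_Icc_of_shift_mem ts _ _ (shift_mem_union_phi (by omega) ?_) k
      ⟨hk.1, by grind⟩
    rw [hM]
    exact Finset.subset_union_right.trans (Finset.subset_insert _ _)
end
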